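/- arXiv:2503.14840 — 7 statements merged into one kernel-verified Lean document; each statement's English description precedes it below -/
import Mathlib

section
/- Under the stated hypotheses, the Long–Moody matrices satisfy the far commutation relation: S_i S_j = S_j S_i for all 1 ≤ i, j ≤ n−1 with |i−j| ≥ 2. -/
open Matrix

namespace KLM

variable {k : Type*} [Field k]

/-- Assemble an `Nn × Nn` matrix from an `n × n` array of `N × N` blocks,
blocks being indexed by natural numbers (only indices `< n` are relevant). -/
def blk (n N : ℕ) (B : ℕ → ℕ → Matrix (Fin N) (Fin N) k) :
    Matrix (Fin n × Fin N) (Fin n × Fin N) k :=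
  Matrix.of fun p q => B p.1.1 q.1.1 p.2 q.2

/-- The Dettweiler–Reiter convolution matrix `G_j = ρ^{DR}_λ(x_j)` (0-based index `j`):
the identity except that the `j`-th block row is
`(λ(g_0−1), …, λ(g_{j−1}−1), λ g_j, g_{j+1}−1, …, g_{n−1}−1)`. -/
def G (n N : ℕ) (g : ℕ → Matrix (Fin N) (Fin N) k) (lam : k) (j : ℕ) :
    Matrix (Fin n × Fin N) (Fin n × Fin N) k :=
  blk n N fun r c =>
    if r = j then
      (if c < j then lam • (g c - 1) else if c = j then lam • g j else g c - 1)
    else if r = c then 1 else 0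

/-- The Long–Moody matrix `S_i = ρ^{LM}(σ_i)` (0-based index `i`):
`(s_i ⊕ ⋯ ⊕ s_i) · diag(1, …, 1, R_i, 1, …, 1)` where `R_i` is the
`2×2` block matrix with rows `(0, g_i)` and `(1, 1 − g_{i+1})`
placed in block rows/columns `i, i+1`. -/
def S (n N : ℕ) (g s : ℕ → Matrix (Fin N) (Fin N) k) (i : ℕ) :
    Matrix (Fin n × Fin N) (Fin n × Fin N) k :=
  blk n N fun r c =>
    if r = i ∧ c = i then 0
    else if r = i ∧ c = i + 1 then s i * g i
    else if r = i + 1 ∧ c = i then s i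
    else if r = i + 1 ∧ c = i + 1 then s i * (1 - g (i + 1))
    else if r = c then s i
    else 0

/-!
As an `n × n` array of `N × N` blocks, `S_i = (s_i ⊕ ⋯ ⊕ s_i) (1 + C_i)`, where
`C_i = R_i - 1` (`lmCorrection`) is supported on the window of blocks `i, i + 1`. For `|i - j| ≥ 2` the windows are disjoint, so
`C_i C_j = C_j C_i = 0`; and `s_i` commutes with `s_j` and with `g_j, g_{j+1}`, the nonscalar
blocks of `C_j`. Hence the two factors of `S_i` commute with the two factors of `S_j`.
-/

end KLM

namespace Matrix

variable {R ι : Type*} [Ring R] [Fintype ι]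

lemma mul_eq_zero_of_forall_col_or_row_eq_zero {X Y : Matrix ι ι R}
    (h : ∀ t, (∀ r, X r t = 0) ∨ ∀ c, Y t c = 0) : X * Y = 0 := by
  ext r c
  refine Finset.sum_eq_zero fun t _ => ?_
  rcases h t with hX | hY
  · exact mul_eq_zero_of_left (hX r) _
  · exact mul_eq_zero_of_right _ (hY c)

variable [DecidableEq ι]

lemma commute_scalar_of_forall_commute {a : R} {M : Matrix ι ι R}
    (h : ∀ r c, Commute a (M r c)) : Commute (scalar ι a) M :=
  scalar_commute_iff.2 <| ext fun r c => (h r c).eq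

lemma commute_one_add_of_mul_eq_zero {X Y : Matrix ι ι R} (hXY : X * Y = 0)
    (hYX : Y * X = 0) : Commute (1 + X) (1 + Y) :=
  (Commute.one_left _).add_left <| (Commute.one_right X).add_right (hXY.trans hYX.symm)

end Matrix

namespace KLM

variable {k : Type*} [Field k]

section Correction

variable {R : Type*} [Ring R]

def lmCorrection (n : ℕ) (g : ℕ → R) (i : ℕ) : Matrix (Fin n) (Fin n) R :=
  of fun r c =>
    if (r : ℕ) = i ∧ (c : ℕ) = i then -1
    else if (r : ℕ) = i ∧ (c : ℕ) = i + 1 then g i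
    else if (r : ℕ) = i + 1 ∧ (c : ℕ) = i then 1
    else if (r : ℕ) = i + 1 ∧ (c : ℕ) = i + 1 then -g (i + 1)
    else 0

lemma lmCorrection_eq_zero_of_ne {n : ℕ} (g : ℕ → R) (i : ℕ) (r c : Fin n)
    (h : ((r : ℕ) ≠ i ∧ (r : ℕ) ≠ i + 1) ∨ ((c : ℕ) ≠ i ∧ (c : ℕ) ≠ i + 1)) :
    lmCorrection n g i r c = 0 := by
  rw [lmCorrection, of_apply]
  split_ifs <;> first | rfl | omega

lemma lmCorrection_mul_eq_zero {n : ℕ} (g : ℕ → R) {i j : ℕ} (h : i + 2 ≤ j ∨ j + 2 ≤ i) :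
    lmCorrection n g i * lmCorrection n g j = 0 :=
  mul_eq_zero_of_forall_col_or_row_eq_zero fun t => by
    by_cases ht : (t : ℕ) = i ∨ (t : ℕ) = i + 1
    · exact .inr fun c => lmCorrection_eq_zero_of_ne g j t c (.inl (by omega))
    · exact .inl fun r => lmCorrection_eq_zero_of_ne g i r t (.inr (by omega))

lemma commute_scalar_one_add_lmCorrection {n : ℕ} (g : ℕ → R) {i : ℕ} {a : R}
    (h₀ : Commute a (g i)) (h₁ : Commute a (g (i + 1))) :
    Commute (scalar (Fin n) a) (1 + lmCorrection n g i) :=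
  (Commute.one_right _).add_right <| commute_scalar_of_forall_commute fun r c => by
    rw [lmCorrection, of_apply]
    split_ifs <;> simp [h₀, h₁]

end Correction

lemma blk_eq_compRingEquiv (n N : ℕ) (B : ℕ → ℕ → Matrix (Fin N) (Fin N) k) :
    blk n N B = compRingEquiv (Fin n) (Fin N) k (of fun r c => B r c) :=
  rfl

lemma S_eq_compRingEquiv (n N : ℕ) (g s : ℕ → Matrix (Fin N) (Fin N) k) (i : ℕ) :
    S n N g s i =
      compRingEquiv (Fin n) (Fin N) k (scalar (Fin n) (s i) * (1 + lmCorrection n g i)) := by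
  rw [S, blk_eq_compRingEquiv]
  congr 1
  refine ext fun r c => ?_
  rw [scalar_apply, diagonal_mul, Matrix.add_apply, one_apply, lmCorrection, of_apply, of_apply]
  simp only [← Fin.val_inj]
  split_ifs <;> first | omega | noncomm_ring

theorem longMoody_far_commutation_general
    (N n : ℕ)
    (g s : ℕ → Matrix (Fin N) (Fin N) k)
    (hbr2 : ∀ i j, i + 1 < n → j + 1 < n → (i + 2 ≤ j ∨ j + 2 ≤ i) →
      s i * s j = s j * s i)
    (ha3 : ∀ i j, i + 1 < n → j < n → j ≠ i → j ≠ i + 1 → s i * g j = g j * s i) :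
    ∀ i j, i + 1 < n → j + 1 < n → (i + 2 ≤ j ∨ j + 2 ≤ i) →
      S n N g s i * S n N g s j = S n N g s j * S n N g s i := by
  intro i j hi hj hfar
  have hss : Commute (scalar (Fin n) (s i)) (scalar (Fin n) (s j)) :=
    Commute.map (hbr2 i j hi hj hfar) _
  have hsC : Commute (scalar (Fin n) (s i)) (1 + lmCorrection n g j) :=
    commute_scalar_one_add_lmCorrection g
      (ha3 i j hi (by omega) (by omega) (by omega)) (ha3 i (j + 1) hi hj (by omega) (by omega))
  have hCs : Commute (1 + lmCorrection n g i) (scalar (Fin n) (s j)) :=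
    (commute_scalar_one_add_lmCorrection g
      (ha3 j i hj (by omega) (by omega) (by omega)) (ha3 j (i + 1) hj hi (by omega) (by omega))).symm
  have hCC : Commute (1 + lmCorrection n g i) (1 + lmCorrection n g j) :=
    commute_one_add_of_mul_eq_zero (lmCorrection_mul_eq_zero g hfar)
      (lmCorrection_mul_eq_zero g hfar.symm)
  rw [S_eq_compRingEquiv, S_eq_compRingEquiv]
  exact Commute.map ((hss.mul_right hsC).mul_left (hCs.mul_right hCC)) _

/-- Far commutation for the Long–Moody matrices:
`S_i S_j = S_j S_i` whenever `|i − j| ≥ 2`. -/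
theorem longMoody_far_commutation
    (N n : ℕ) (hN : 1 ≤ N) (hn : 2 ≤ n)
    (g s : ℕ → Matrix (Fin N) (Fin N) k) (lam : k) (hlam : lam ≠ 0)
    (hgu : ∀ j, j < n → IsUnit (g j))
    (hsu : ∀ i, i + 1 < n → IsUnit (s i))
    (hbr1 : ∀ i, i + 2 < n → s i * s (i + 1) * s i = s (i + 1) * s i * s (i + 1))
    (hbr2 : ∀ i j, i + 1 < n → j + 1 < n → (i + 2 ≤ j ∨ j + 2 ≤ i) →
      s i * s j = s j * s i)
    (ha1 : ∀ i, i + 1 < n → s i * g i = g (i + 1) * s i)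
    (ha2 : ∀ i, i + 1 < n → g (i + 1) * s i * g (i + 1) = g i * g (i + 1) * s i)
    (ha3 : ∀ i j, i + 1 < n → j < n → j ≠ i → j ≠ i + 1 → s i * g j = g j * s i) :
    ∀ i j, i + 1 < n → j + 1 < n → (i + 2 ≤ j ∨ j + 2 ≤ i) →
      S n N g s i * S n N g s j = S n N g s j * S n N g s i :=
  longMoody_far_commutation_general N n g s hbr2 ha3

end KLM
end

section
/- Under the stated hypotheses, the Long–Moody matrices satisfy the braid relation: S_i S_{i+1} S_i = S_{i+1} S_i S_{i+1} for all 1 ≤ i ≤ n−2. -/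
/-!
Both `S_i` and `S_{i+1}` are block diagonal for the splitting of the block indices into
`{0, …, i-1}`, `{i, i+1, i+2}` and `{i+3, …, n-1}`: on the outer blocks they act as the scalars
`s_i`, resp. `s_{i+1}`, and on the middle one by explicit `3 × 3` matrices over the ring of
`N × N` matrices. So the braid relation splits into `s_i s_{i+1} s_i = s_{i+1} s_i s_{i+1}` on the
outer blocks and a `3 × 3` identity, which follows from the braid relation and the Artin relations
at `i` and `i + 1`; the one non-obvious input is that `s_{i+1}` commutes with `g_{i+1} g_{i+2}`.
-/

open Matrix

namespace KLM

variable {k : Type*} [Field k]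

section EmbedBlock

variable {A : Type*} [Semiring A] {m : ℕ}

theorem exists_fin_eq_add {i r : ℕ} (hi : i ≤ r) (hr : r - i < m) : ∃ p : Fin m, r = i + p :=
  ⟨⟨r - i, hr⟩, by simp only; omega⟩

theorem sum_fin_eq_sum_fin_add_of_eq_zero {i n : ℕ} (hm : i + m ≤ n) (f : ℕ → A)
    (hf : ∀ t, t < i ∨ i + m ≤ t → f t = 0) : ∑ t : Fin n, f t = ∑ q : Fin m, f (i + q) := by
  have hIco : ∑ q ∈ Finset.range m, f (i + q) = ∑ t ∈ Finset.Ico i (i + m), f t := by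
    rw [Finset.sum_Ico_eq_sum_range, Nat.add_sub_cancel_left]
  rw [Fin.sum_univ_eq_sum_range f, Fin.sum_univ_eq_sum_range (fun q => f (i + q)), hIco]
  symm
  refine Finset.sum_subset (fun t ht => ?_) (fun t ht ht' => hf t ?_)
  · simp only [Finset.mem_Ico, Finset.mem_range] at ht ⊢; omega
  · simp only [Finset.mem_Ico, Finset.mem_range] at ht ht'; omega

/-- The block function of `diag(d, …, d, L, d, …, d)`, with `L` in block rows and columns
`i, …, i + m - 1`. -/
def embedBlock (i : ℕ) (L : Matrix (Fin m) (Fin m) A) (d : A) (r c : ℕ) : A :=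
  if h : i ≤ r ∧ i ≤ c ∧ r - i < m ∧ c - i < m then L ⟨r - i, h.2.2.1⟩ ⟨c - i, h.2.2.2⟩
  else if r = c then d else 0

variable {i : ℕ} {L M : Matrix (Fin m) (Fin m) A} {d e : A}

theorem embedBlock_add_add (p q : Fin m) : embedBlock i L d (i + p) (i + q) = L p q := by
  simp [embedBlock]

theorem embedBlock_of_not_mem {r c : ℕ} (h : ¬(i ≤ r ∧ i ≤ c ∧ r - i < m ∧ c - i < m)) :
    embedBlock i L d r c = if r = c then d else 0 :=
  dif_neg h

theorem eq_embedBlock {B : ℕ → ℕ → A} (hin : ∀ p q : Fin m, B (i + p) (i + q) = L p q)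
    (hout : ∀ r c, ¬(i ≤ r ∧ i ≤ c ∧ r - i < m ∧ c - i < m) → B r c = if r = c then d else 0) :
    B = embedBlock i L d := by
  funext r c
  by_cases h : i ≤ r ∧ i ≤ c ∧ r - i < m ∧ c - i < m
  · obtain ⟨p, rfl⟩ := exists_fin_eq_add h.1 h.2.2.1
    obtain ⟨q, rfl⟩ := exists_fin_eq_add h.2.1 h.2.2.2
    rw [hin, embedBlock_add_add]
  · rw [hout r c h, embedBlock_of_not_mem h]

theorem sum_embedBlock_mul_embedBlock {n : ℕ} (hm : i + m ≤ n) {r : ℕ} (hr : r < n) (c : ℕ) :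
    ∑ t : Fin n, embedBlock i L d r t * embedBlock i M e t c =
      embedBlock i (L * M) (d * e) r c := by
  by_cases hrw : i ≤ r ∧ r - i < m
  · obtain ⟨p, rfl⟩ := exists_fin_eq_add hrw.1 hrw.2
    rw [sum_fin_eq_sum_fin_add_of_eq_zero hm
      (fun t => embedBlock i L d (i + p) t * embedBlock i M e t c)
      fun t ht => by rw [embedBlock_of_not_mem (by omega), if_neg (by omega), zero_mul]]
    simp_rw [embedBlock_add_add]
    by_cases hcw : i ≤ c ∧ c - i < m
    · obtain ⟨q, rfl⟩ := exists_fin_eq_add hcw.1 hcw.2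
      simp_rw [embedBlock_add_add, mul_apply]
    · rw [embedBlock_of_not_mem (by omega), if_neg (by omega)]
      exact Finset.sum_eq_zero fun q _ => by
        rw [embedBlock_of_not_mem (by omega), if_neg (by omega), mul_zero]
  · have hrow : ∀ t, embedBlock i L d r t = if r = t then d else 0 := fun t =>
      embedBlock_of_not_mem (by omega)
    rw [Fintype.sum_eq_single ⟨r, hr⟩ fun t ht => by
        rw [hrow, if_neg fun h => ht (Fin.ext h.symm), zero_mul],
      Fin.val_mk, hrow, if_pos rfl, embedBlock_of_not_mem (by omega),
      embedBlock_of_not_mem (by omega), mul_ite, mul_zero]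

end EmbedBlock

section BlockMatrix

variable {R : Type*}

theorem blk_congr {n N : ℕ} {B C : ℕ → ℕ → Matrix (Fin N) (Fin N) R}
    (h : ∀ r c, r < n → c < n → B r c = C r c) : blk n N B = blk n N C := by
  ext p q
  simp only [blk, of_apply, h p.1 q.1 p.1.2 q.1.2]

theorem blk_mul [NonUnitalNonAssocSemiring R] (n N : ℕ)
    (B C : ℕ → ℕ → Matrix (Fin N) (Fin N) R) :
    blk n N B * blk n N C = blk n N fun r c => ∑ t : Fin n, B r t * C t c := by
  ext p q
  simp [blk, mul_apply, Matrix.sum_apply, Fintype.sum_prod_type]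

theorem blk_embedBlock_mul [Semiring R] {n N m i : ℕ} (hm : i + m ≤ n)
    (L M : Matrix (Fin m) (Fin m) (Matrix (Fin N) (Fin N) R)) (d e : Matrix (Fin N) (Fin N) R) :
    blk n N (embedBlock i L d) * blk n N (embedBlock i M e) =
      blk n N (embedBlock i (L * M) (d * e)) := by
  rw [blk_mul]
  exact blk_congr fun r c hr _ => sum_embedBlock_mul_embedBlock hm hr c

end BlockMatrix

section LocalBraid

variable {A : Type*} [Ring A]

def localS (a g₀ g₁ : A) : Matrix (Fin 3) (Fin 3) A :=
  !![0, a * g₀, 0; a, a * (1 - g₁), 0; 0, 0, a]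

def localSSucc (b g₁ g₂ : A) : Matrix (Fin 3) (Fin 3) A :=
  !![b, 0, 0; 0, 0, b * g₁; 0, b, b * (1 - g₂)]

theorem localS_braid {a b g₀ g₁ g₂ : A} (ha : a * g₀ = g₁ * a) (hb : b * g₁ = g₂ * b)
    (ha₂ : a * g₂ = g₂ * a) (hb₀ : b * g₀ = g₀ * b) (hbg : g₂ * b * g₂ = g₁ * g₂ * b)
    (hab : a * b * a = b * a * b) :
    localS a g₀ g₁ * localSSucc b g₁ g₂ * localS a g₀ g₁ =
      localSSucc b g₁ g₂ * localS a g₀ g₁ * localSSucc b g₁ g₂ := by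
  have ha' (x : A) : a * (g₀ * x) = g₁ * (a * x) := by rw [← mul_assoc, ha, mul_assoc]
  have hb' (x : A) : b * (g₁ * x) = g₂ * (b * x) := by rw [← mul_assoc, hb, mul_assoc]
  have ha₂' (x : A) : a * (g₂ * x) = g₂ * (a * x) := by rw [← mul_assoc, ha₂, mul_assoc]
  have hbg' (x : A) : g₂ * (b * (g₂ * x)) = g₁ * (g₂ * (b * x)) := by
    rw [← mul_assoc, ← mul_assoc, hbg, mul_assoc, mul_assoc]
  have hab' (x : A) : a * (b * (a * x)) = b * (a * (b * x)) := by
    rw [← mul_assoc, ← mul_assoc, hab, mul_assoc, mul_assoc]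
  have hab_r : a * (b * a) = b * (a * b) := by rw [← mul_assoc, hab, mul_assoc]
  have hb_comm_g₁g₂ (x : A) : b * (g₁ * (g₂ * x)) = g₁ * (g₂ * (b * x)) := by rw [hb', hbg']
  -- After moving `a` and `b` to the right with the rules above, three words remain stuck.
  have key₁ : a * (g₁ * (g₂ * (b * a))) = g₂ * (b * (a * (b * g₂))) := by
    rw [← hb_comm_g₁g₂, ← ha₂, hb', ha₂', hab']
  have key₂ : a * (b * (g₂ * a)) = b * (a * (b * g₂)) := by rw [← ha₂, hab']
  have key₃ : b * (g₂ * (a * (b * g₂))) = b * (a * (g₁ * (g₂ * b))) := by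
    rw [← ha₂', ← mul_assoc g₂ b g₂, hbg, mul_assoc]
  ext x y
  fin_cases x <;> fin_cases y <;>
    simp [localS, localSSucc, mul_apply, Fin.sum_univ_three, mul_sub, sub_mul, ← mul_assoc] <;>
    simp only [mul_assoc, ha, hb, hb₀, ha', hb', ha₂', hbg', hab_r, key₁, key₂, key₃]
  abel

end LocalBraid

theorem S_eq_blk_embedBlock (n N : ℕ) (g s : ℕ → Matrix (Fin N) (Fin N) k) (i : ℕ) :
    S n N g s i = blk n N (embedBlock i (localS (s i) (g i) (g (i + 1))) (s i)) := by
  refine congrArg (blk n N) (eq_embedBlock (fun p q => ?_) fun r c h => ?_)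
  · fin_cases p <;> fin_cases q <;> simp [localS]
  · split_ifs <;> first | rfl | omega

theorem S_succ_eq_blk_embedBlock (n N : ℕ) (g s : ℕ → Matrix (Fin N) (Fin N) k) (i : ℕ) :
    S n N g s (i + 1) =
      blk n N (embedBlock i (localSSucc (s (i + 1)) (g (i + 1)) (g (i + 2))) (s (i + 1))) := by
  refine congrArg (blk n N) (eq_embedBlock (fun p q => ?_) fun r c h => ?_)
  · fin_cases p <;> fin_cases q <;> simp [localSSucc, add_assoc]
  · split_ifs <;> first | rfl | omega

theorem longMoody_braid_relation_general
    (N n : ℕ)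
    (g s : ℕ → Matrix (Fin N) (Fin N) k)
    (hbr1 : ∀ i, i + 2 < n → s i * s (i + 1) * s i = s (i + 1) * s i * s (i + 1))
    (ha1 : ∀ i, i + 1 < n → s i * g i = g (i + 1) * s i)
    (ha2 : ∀ i, i + 1 < n → g (i + 1) * s i * g (i + 1) = g i * g (i + 1) * s i)
    (ha3 : ∀ i j, i + 1 < n → j < n → j ≠ i → j ≠ i + 1 → s i * g j = g j * s i) :
    ∀ i, i + 2 < n →
      S n N g s i * S n N g s (i + 1) * S n N g s i =
        S n N g s (i + 1) * S n N g s i * S n N g s (i + 1) := by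
  intro i hi
  have hlocal := localS_braid (ha1 i (by omega)) (ha1 (i + 1) hi)
    (ha3 i (i + 2) (by omega) hi (by omega) (by omega))
    (ha3 (i + 1) i hi (by omega) (by omega) (by omega)) (ha2 (i + 1) hi) (hbr1 i hi)
  rw [S_eq_blk_embedBlock n N g s i, S_succ_eq_blk_embedBlock n N g s i]
  simp only [blk_embedBlock_mul (show i + 3 ≤ n by omega)]
  rw [hlocal, hbr1 i hi]

/-- Braid relation for the Long–Moody matrices:
`S_i S_{i+1} S_i = S_{i+1} S_i S_{i+1}`. -/
theorem longMoody_braid_relation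
    (N n : ℕ) (hN : 1 ≤ N) (hn : 2 ≤ n)
    (g s : ℕ → Matrix (Fin N) (Fin N) k) (lam : k) (hlam : lam ≠ 0)
    (hgu : ∀ j, j < n → IsUnit (g j))
    (hsu : ∀ i, i + 1 < n → IsUnit (s i))
    (hbr1 : ∀ i, i + 2 < n → s i * s (i + 1) * s i = s (i + 1) * s i * s (i + 1))
    (hbr2 : ∀ i j, i + 1 < n → j + 1 < n → (i + 2 ≤ j ∨ j + 2 ≤ i) →
      s i * s j = s j * s i)
    (ha1 : ∀ i, i + 1 < n → s i * g i = g (i + 1) * s i)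
    (ha2 : ∀ i, i + 1 < n → g (i + 1) * s i * g (i + 1) = g i * g (i + 1) * s i)
    (ha3 : ∀ i j, i + 1 < n → j < n → j ≠ i → j ≠ i + 1 → s i * g j = g j * s i) :
    ∀ i, i + 2 < n →
      S n N g s i * S n N g s (i + 1) * S n N g s i =
        S n N g s (i + 1) * S n N g s i * S n N g s (i + 1) :=
  longMoody_braid_relation_general N n g s hbr1 ha1 ha2 ha3

end KLM
end

section
/- For every w = (w_1,…,w_n) ∈ K and every 1 ≤ j ≤ n, the vector G_j w equals w with its j-th block replaced by λ w_j; in particular the subspace K is invariant under each G_j. -/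
open Matrix

namespace KLM

variable {k : Type*} [Field k]

/-- `K = {(w_1,…,w_n) : g_j w_j = w_j for all j}` (blockwise fixed vectors). -/
def Kset (n N : ℕ) (g : ℕ → Matrix (Fin N) (Fin N) k) : Set ((Fin n × Fin N) → k) :=
  {w | ∀ j : Fin n, (g (j : ℕ)).mulVec (fun a => w (j, a)) = fun a => w (j, a)}

/-- The ordered product `G_1 G_2 ⋯ G_n`. -/
def Gprod (n N : ℕ) (g : ℕ → Matrix (Fin N) (Fin N) k) (lam : k) :
    Matrix (Fin n × Fin N) (Fin n × Fin N) k :=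
  ((List.finRange n).map fun j => G n N g lam (j : ℕ)).prod

/-- `L = ker (G_1 G_2 ⋯ G_n − 1)`. -/
def Lset (n N : ℕ) (g : ℕ → Matrix (Fin N) (Fin N) k) (lam : k) :
    Set ((Fin n × Fin N) → k) :=
  {x | (Gprod n N g lam - 1).mulVec x = 0}

section Blocks

variable {n N : ℕ}

theorem blk_mulVec_apply (B : ℕ → ℕ → Matrix (Fin N) (Fin N) k) (w : Fin n × Fin N → k)
    (r : Fin n) (b : Fin N) :
    (blk n N B *ᵥ w) (r, b) = ∑ c : Fin n, (B r c *ᵥ fun a => w (c, a)) b := by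
  simp only [blk, mulVec, dotProduct, of_apply, Fintype.sum_prod_type]

variable {g : ℕ → Matrix (Fin N) (Fin N) k} {w : Fin n × Fin N → k}

theorem sub_one_mulVec_block_eq_zero (hw : w ∈ Kset n N g) (c : Fin n) :
    (g c - 1) *ᵥ (fun a => w (c, a)) = 0 := by
  rw [sub_mulVec, one_mulVec, hw c, sub_self]

theorem G_mulVec_of_mem_Kset (lam : k) (hw : w ∈ Kset n N g) (j : Fin n) :
    G n N g lam j *ᵥ w = fun p => if p.1 = j then lam * w (j, p.2) else w p := by
  funext ⟨r, b⟩
  rw [G, blk_mulVec_apply]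
  by_cases hr : r = j
  · subst hr
    rw [Finset.sum_eq_single r]
    · simp [smul_mulVec, hw r]
    · intro c _ hc
      have hcr : (c : ℕ) ≠ r := Fin.val_ne_of_ne hc
      rw [if_pos rfl, if_neg hcr]
      split_ifs <;> simp [smul_mulVec, sub_one_mulVec_block_eq_zero hw c]
    · simp
  · rw [Finset.sum_eq_single r]
    · simp [hr, Fin.val_ne_of_ne hr]
    · intro c _ hc
      simp [Fin.val_ne_of_ne hr, Fin.val_ne_of_ne hc.symm]
    · simp

theorem smul_block_mem_Kset (lam : k) (hw : w ∈ Kset n N g) (j : Fin n) :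
    (fun p : Fin n × Fin N => if p.1 = j then lam * w (j, p.2) else w p) ∈ Kset n N g := by
  intro c
  by_cases hc : c = j
  · subst hc
    simpa [← smul_eq_mul, ← Pi.smul_def, mulVec_smul] using congrArg (lam • ·) (hw c)
  · simpa [hc] using hw c

end Blocks

theorem K_invariant_under_G_general
    (N n : ℕ)
    (g : ℕ → Matrix (Fin N) (Fin N) k) (lam : k) :
    ∀ w ∈ Kset n N g, ∀ j : Fin n,
      ((G n N g lam (j : ℕ)).mulVec w =
        fun p => if p.1 = j then lam * w (j, p.2) else w p) ∧
      (G n N g lam (j : ℕ)).mulVec w ∈ Kset n N g := by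
  intro w hw j
  rw [G_mulVec_of_mem_Kset lam hw j]
  exact ⟨rfl, smul_block_mem_Kset lam hw j⟩

/-- For `w ∈ K`, the vector `G_j w` is `w` with its `j`-th block replaced by
`λ w_j`; in particular `K` is invariant under each `G_j`. -/
theorem K_invariant_under_G
    (N n : ℕ) (hN : 1 ≤ N) (hn : 2 ≤ n)
    (g s : ℕ → Matrix (Fin N) (Fin N) k) (lam : k) (hlam : lam ≠ 0)
    (hgu : ∀ j, j < n → IsUnit (g j))
    (hsu : ∀ i, i + 1 < n → IsUnit (s i))
    (hbr1 : ∀ i, i + 2 < n → s i * s (i + 1) * s i = s (i + 1) * s i * s (i + 1))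
    (hbr2 : ∀ i j, i + 1 < n → j + 1 < n → (i + 2 ≤ j ∨ j + 2 ≤ i) →
      s i * s j = s j * s i)
    (ha1 : ∀ i, i + 1 < n → s i * g i = g (i + 1) * s i)
    (ha2 : ∀ i, i + 1 < n → g (i + 1) * s i * g (i + 1) = g i * g (i + 1) * s i)
    (ha3 : ∀ i j, i + 1 < n → j < n → j ≠ i → j ≠ i + 1 → s i * g j = g j * s i) :
    ∀ w ∈ Kset n N g, ∀ j : Fin n,
      ((G n N g lam (j : ℕ)).mulVec w =
        fun p => if p.1 = j then lam * w (j, p.2) else w p) ∧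
      (G n N g lam (j : ℕ)).mulVec w ∈ Kset n N g :=
  K_invariant_under_G_general N n g lam

end KLM
end

section
/- The subspace K is invariant under each Long–Moody matrix S_i: S_i(K) ⊆ K for all 1 ≤ i ≤ n−1. -/
open Matrix

namespace KLM

variable {k : Type*} [Field k]

lemma blk_mulVec {n N : ℕ} (B : ℕ → ℕ → Matrix (Fin N) (Fin N) k)
    (w : (Fin n × Fin N) → k) (j : Fin n) (a : Fin N) :
    (blk n N B).mulVec w (j, a) =
      ∑ c : Fin n, ((B (j : ℕ) (c : ℕ)).mulVec (fun b => w (c, b))) a := by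
  simp [blk, Matrix.mulVec, dotProduct, Fintype.sum_prod_type]

/-- The subspace `K` is invariant under each Long–Moody matrix `S_i`. -/
theorem K_invariant_under_S
    (N n : ℕ) (hN : 1 ≤ N) (hn : 2 ≤ n)
    (g s : ℕ → Matrix (Fin N) (Fin N) k) (lam : k) (hlam : lam ≠ 0)
    (hgu : ∀ j, j < n → IsUnit (g j))
    (hsu : ∀ i, i + 1 < n → IsUnit (s i))
    (hbr1 : ∀ i, i + 2 < n → s i * s (i + 1) * s i = s (i + 1) * s i * s (i + 1))
    (hbr2 : ∀ i j, i + 1 < n → j + 1 < n → (i + 2 ≤ j ∨ j + 2 ≤ i) →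
      s i * s j = s j * s i)
    (ha1 : ∀ i, i + 1 < n → s i * g i = g (i + 1) * s i)
    (ha2 : ∀ i, i + 1 < n → g (i + 1) * s i * g (i + 1) = g i * g (i + 1) * s i)
    (ha3 : ∀ i j, i + 1 < n → j < n → j ≠ i → j ≠ i + 1 → s i * g j = g j * s i) :
    ∀ w ∈ Kset n N g, ∀ i, i + 1 < n → (S n N g s i).mulVec w ∈ Kset n N g := by
  intro w hw i hi
  have hin : i < n := Nat.lt_of_succ_lt hi
  set fi : Fin n := ⟨i, hin⟩ with hfi
  set fi1 : Fin n := ⟨i + 1, hi⟩ with hfi1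
  have hne : fi ≠ fi1 := by simp [hfi, hfi1, Fin.ext_iff]
  set wv : Fin n → Fin N → k := fun c b => w (c, b) with hwvdef
  have hwv : ∀ c : Fin n, (g (c : ℕ)).mulVec (wv c) = wv c := hw
  have h1 := ha1 i hi
  have h2 := ha2 i hi
  intro j
  by_cases hji : j = fi
  · -- row i : v = (s i * g i) *ᵥ wv fi1
    subst hji
    have hv : (fun a => (S n N g s i).mulVec w (fi, a)) = (s i * g i).mulVec (wv fi1) := by
      funext a
      show (blk n N _).mulVec w (fi, a) = _
      rw [blk_mulVec]
      rw [Finset.sum_eq_single fi1]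
      · simp [hfi, hfi1, Nat.succ_ne_self, wv]
      · intro c _ hc
        have hc1 : (c : ℕ) ≠ i + 1 := fun h => hc (Fin.ext h)
        by_cases hc0 : (c : ℕ) = i
        · simp [hfi, hc0, hc1]
        · have hic : i ≠ (c : ℕ) := fun h => hc0 h.symm
          simp [hfi, hc0, hc1, hic, Nat.succ_ne_self]
      · simp
    show (g ((fi : Fin n) : ℕ)).mulVec _ = _
    rw [hv]
    have key : g i * (s i * g i) = (g (i+1) * s i) * g (i+1) := by
      rw [h1, ← mul_assoc, ← h2]
    have : (fi : ℕ) = i := rfl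
    rw [this]
    calc (g i).mulVec ((s i * g i).mulVec (wv fi1))
        = (g i * (s i * g i)).mulVec (wv fi1) := by rw [Matrix.mulVec_mulVec]
      _ = ((g (i+1) * s i) * g (i+1)).mulVec (wv fi1) := by rw [key]
      _ = (g (i+1) * s i).mulVec ((g (i+1)).mulVec (wv fi1)) := by
            rw [Matrix.mulVec_mulVec]
      _ = (g (i+1) * s i).mulVec (wv fi1) := by
            rw [show (g (i+1)).mulVec (wv fi1) = wv fi1 from hwv fi1]
      _ = (s i * g i).mulVec (wv fi1) := by rw [h1]
  · by_cases hji1 : j = fi1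
    · -- row i+1 : v = s i *ᵥ wv fi
      subst hji1
      have hv : (fun a => (S n N g s i).mulVec w (fi1, a)) = (s i).mulVec (wv fi) := by
        funext a
        show (blk n N _).mulVec w (fi1, a) = _
        rw [blk_mulVec]
        have hzero : ∀ c ∈ (Finset.univ : Finset (Fin n)), c ∉ ({fi, fi1} : Finset (Fin n)) →
            ((if (i:ℕ)+1 = i ∧ (c:ℕ) = i then (0:Matrix (Fin N) (Fin N) k)
              else if (i:ℕ)+1 = i ∧ (c:ℕ) = i+1 then s i * g i
              else if (i:ℕ)+1 = i+1 ∧ (c:ℕ) = i then s i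
              else if (i:ℕ)+1 = i+1 ∧ (c:ℕ) = i+1 then s i * (1 - g (i+1))
              else if (i:ℕ)+1 = (c:ℕ) then s i else 0)).mulVec (fun b => w (c, b)) a = 0 := by
          intro c _ hc
          simp only [Finset.mem_insert, Finset.mem_singleton, not_or] at hc
          have hc0 : (c : ℕ) ≠ i := fun h => hc.1 (Fin.ext h)
          have hc1 : (c : ℕ) ≠ i + 1 := fun h => hc.2 (Fin.ext h)
          have hic : i + 1 ≠ (c : ℕ) := fun h => hc1 h.symm
          simp [hc0, hc1, hic, Nat.succ_ne_self]
        rw [← Finset.sum_subset (Finset.subset_univ ({fi, fi1} : Finset (Fin n))) hzero,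
          Finset.sum_pair hne]
        have hii1 : ¬ (i + 1 = i) := Nat.succ_ne_self i
        have hii2 : ¬ (i = i + 1) := fun h => Nat.succ_ne_self i h.symm
        have h0 : (s i * (1 - g (i+1))).mulVec (fun b => w (fi1, b)) = 0 := by
          rw [← Matrix.mulVec_mulVec, show ((1 : Matrix (Fin N) (Fin N) k) - g (i+1)).mulVec
              (fun b => w (fi1, b)) = (fun b => w (fi1, b)) - (g (i+1)).mulVec (fun b => w (fi1, b))
              from by rw [Matrix.sub_mulVec, Matrix.one_mulVec],
            show (g (i+1)).mulVec (fun b => w (fi1, b)) = fun b => w (fi1, b) from hwv fi1,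
            sub_self, Matrix.mulVec_zero]
        simp [hii1, hii2, h0, wv, show (fi : ℕ) = i from rfl, show (fi1 : ℕ) = i + 1 from rfl]
      show (g ((fi1 : Fin n) : ℕ)).mulVec _ = _
      rw [hv]
      have : (fi1 : ℕ) = i + 1 := rfl
      rw [this]
      calc (g (i+1)).mulVec ((s i).mulVec (wv fi))
          = (g (i+1) * s i).mulVec (wv fi) := by rw [Matrix.mulVec_mulVec]
        _ = (s i * g i).mulVec (wv fi) := by rw [h1]
        _ = (s i).mulVec ((g i).mulVec (wv fi)) := by rw [Matrix.mulVec_mulVec]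
        _ = (s i).mulVec (wv fi) := by
              rw [show (g i).mulVec (wv fi) = wv fi from hwv fi]
    · -- other rows : v = s i *ᵥ wv j
      have hj0 : (j : ℕ) ≠ i := fun h => hji (Fin.ext h)
      have hj1 : (j : ℕ) ≠ i + 1 := fun h => hji1 (Fin.ext h)
      have hv : (fun a => (S n N g s i).mulVec w (j, a)) = (s i).mulVec (wv j) := by
        funext a
        show (blk n N _).mulVec w (j, a) = _
        rw [blk_mulVec]
        rw [Finset.sum_eq_single j]
        · simp [hj0, hj1, wv]
        · intro c _ hc
          have hcj : (j : ℕ) ≠ (c : ℕ) := fun h => hc (Fin.ext h.symm)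
          by_cases hc0 : (c : ℕ) = i
          · simp [hj0, hj1, hc0, hcj]
          · by_cases hc1 : (c : ℕ) = i + 1
            · simp [hj0, hj1, hc1, hcj]
            · simp [hj0, hj1, hc0, hc1, hcj]
        · simp
      show (g ((j : Fin n) : ℕ)).mulVec _ = _
      rw [hv]
      have hcomm := ha3 i (j : ℕ) hi j.2 hj0 hj1
      calc (g (j:ℕ)).mulVec ((s i).mulVec (wv j))
          = (g (j:ℕ) * s i).mulVec (wv j) := by rw [Matrix.mulVec_mulVec]
        _ = (s i * g (j:ℕ)).mulVec (wv j) := by rw [hcomm]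
        _ = (s i).mulVec ((g (j:ℕ)).mulVec (wv j)) := by rw [Matrix.mulVec_mulVec]
        _ = (s i).mulVec (wv j) := by rw [show (g (j:ℕ)).mulVec (wv j) = wv j from hwv j]


end KLM
end

section
/- The subspace L is invariant under each matrix G_j: G_j(L) ⊆ L for all 1 ≤ j ≤ n. -/
open Matrix

namespace KLM

variable {k : Type*} [Field k]

section Aux

variable {k : Type*} [Field k]

/-- Off the `j`-th block row, `G j` has identity rows. -/
lemma G_apply_ne {n N : ℕ} (g : ℕ → Matrix (Fin N) (Fin N) k) (lam : k) (j : ℕ)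
    (p q : Fin n × Fin N) (hp : (p.1 : ℕ) ≠ j) :
    G n N g lam j p q = (1 : Matrix (Fin n × Fin N) (Fin n × Fin N) k) p q := by
  simp only [G, blk, Matrix.of_apply, if_neg hp]
  by_cases h : (p.1 : ℕ) = (q.1 : ℕ)
  · have h1 : p.1 = q.1 := Fin.ext h
    rw [if_pos h, Matrix.one_apply, Matrix.one_apply]
    by_cases h2 : p.2 = q.2
    · rw [if_pos h2, if_pos (Prod.ext h1 h2)]
    · rw [if_neg h2, if_neg (by intro hpq; exact h2 (congrArg Prod.snd hpq))]
  · rw [if_neg h, Matrix.one_apply,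
      if_neg (by intro hpq; exact h (congrArg (fun r => ((r.1 : Fin n) : ℕ)) hpq))]
    rfl

lemma G_mulVec_apply_ne {n N : ℕ} (g : ℕ → Matrix (Fin N) (Fin N) k) (lam : k) (j : ℕ)
    (v : (Fin n × Fin N) → k) (p : Fin n × Fin N) (hp : (p.1 : ℕ) ≠ j) :
    (G n N g lam j).mulVec v p = v p := by
  have : (G n N g lam j).mulVec v p
      = (1 : Matrix (Fin n × Fin N) (Fin n × Fin N) k).mulVec v p := by
    simp only [Matrix.mulVec, dotProduct]
    exact Finset.sum_congr rfl fun q _ => by rw [G_apply_ne g lam j p q hp]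
  rw [this, Matrix.one_mulVec]

/-- A product of `G j`'s, none of whose indices equals the block row of `p`,
fixes the `p` coordinate. -/
lemma prod_G_mulVec_apply {n N : ℕ} (g : ℕ → Matrix (Fin N) (Fin N) k) (lam : k) :
    ∀ (l : List ℕ) (v : (Fin n × Fin N) → k) (p : Fin n × Fin N),
      (∀ j ∈ l, (p.1 : ℕ) ≠ j) →
      ((l.map fun j => G n N g lam j).prod).mulVec v p = v p := by
  intro l
  induction l with
  | nil => intro v p _; simp [Matrix.one_mulVec]
  | cons a t ih =>
    intro v p hp
    have h1 : ((a :: t).map fun j => G n N g lam j).prod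
        = G n N g lam a * ((t.map fun j => G n N g lam j).prod) := by
      simp [List.prod_cons]
    rw [h1, ← Matrix.mulVec_mulVec,
      G_mulVec_apply_ne g lam a _ p (hp a List.mem_cons_self),
      ih v p fun j hj => hp j (List.mem_cons_of_mem a hj)]

end Aux

/-- The subspace `L = ker(G_1 ⋯ G_n − 1)` is invariant under each `G_j`. -/
theorem L_invariant_under_G
    (N n : ℕ) (hN : 1 ≤ N) (hn : 2 ≤ n)
    (g s : ℕ → Matrix (Fin N) (Fin N) k) (lam : k) (hlam : lam ≠ 0)
    (hgu : ∀ j, j < n → IsUnit (g j))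
    (hsu : ∀ i, i + 1 < n → IsUnit (s i))
    (hbr1 : ∀ i, i + 2 < n → s i * s (i + 1) * s i = s (i + 1) * s i * s (i + 1))
    (hbr2 : ∀ i j, i + 1 < n → j + 1 < n → (i + 2 ≤ j ∨ j + 2 ≤ i) →
      s i * s j = s j * s i)
    (ha1 : ∀ i, i + 1 < n → s i * g i = g (i + 1) * s i)
    (ha2 : ∀ i, i + 1 < n → g (i + 1) * s i * g (i + 1) = g i * g (i + 1) * s i)
    (ha3 : ∀ i j, i + 1 < n → j < n → j ≠ i → j ≠ i + 1 → s i * g j = g j * s i) :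
    ∀ x ∈ Lset n N g lam, ∀ j, j < n →
      (G n N g lam j).mulVec x ∈ Lset n N g lam := by
  intro x hx j hj
  -- suffix products, indexed over `List.range`
  have hQdef : ∀ m : ℕ, True := fun _ => trivial
  set Q : ℕ → Matrix (Fin n × Fin N) (Fin n × Fin N) k := fun m =>
    (((List.range n).drop m).map fun i => G n N g lam i).prod with hQ
  have hmemdrop : ∀ m i, i ∈ (List.range n).drop m → m ≤ i ∧ i < n := by
    intro m i hi
    rw [List.mem_iff_getElem] at hi
    obtain ⟨t, ht, rfl⟩ := hi
    rw [List.getElem_drop]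
    have ht' : m + t < n := by
      have := ht
      rwa [List.length_drop, List.length_range, Nat.lt_sub_iff_add_lt, Nat.add_comm] at this
    rw [List.getElem_range]
    omega
  have hstep : ∀ m, m < n → Q m = G n N g lam m * Q (m + 1) := by
    intro m hm
    have hm' : m < (List.range n).length := by simpa using hm
    rw [hQ]
    simp only
    rw [List.drop_eq_getElem_cons hm', List.map_cons, List.prod_cons, List.getElem_range]
  have hQfix : ∀ v : (Fin n × Fin N) → k, ∀ m, ∀ p : Fin n × Fin N, (p.1 : ℕ) < m →
      (Q m).mulVec v p = v p := by
    intro v m p hpm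
    exact prod_G_mulVec_apply g lam _ v p
      (fun i hi => by have := hmemdrop m i hi; omega)
  have hQ0 : (Q 0).mulVec x = x := by
    have hx' : (Gprod n N g lam - 1).mulVec x = 0 := hx
    rw [Matrix.sub_mulVec, Matrix.one_mulVec, sub_eq_zero] at hx'
    have hcoe : (do let a ← List.finRange n; pure ((a : ℕ))) = List.range n := by
      show List.flatMap (fun a : Fin n => [(a : ℕ)]) (List.finRange n) = List.range n
      rw [← List.map_eq_flatMap]
      exact List.map_coe_finRange_eq_range
    have : Q 0 = Gprod n N g lam := by
      rw [hQ]; simp only [List.drop_zero]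
      rw [Gprod]
      rw [show ((List.finRange n).map fun j => G n N g lam (j : ℕ))
          = List.map (fun i => G n N g lam i) (do let a ← List.finRange n; pure ((a : ℕ)))
          from rfl, hcoe]
    rw [this]
    exact hx'
  have hkey : ∀ m, m ≤ n → (Q m).mulVec x = x := by
    intro m
    induction m with
    | zero => intro _; exact hQ0
    | succ m ih =>
      intro hm1
      have hm : m < n := hm1
      have hQm := ih (Nat.le_of_lt hm)
      have hGm : (G n N g lam m).mulVec ((Q (m + 1)).mulVec x) = x := by
        rw [Matrix.mulVec_mulVec, ← hstep m hm]; exact hQm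
      funext p
      by_cases hp : (p.1 : ℕ) = m
      · exact hQfix x (m + 1) p (by omega)
      · calc (Q (m + 1)).mulVec x p
            = (G n N g lam m).mulVec ((Q (m + 1)).mulVec x) p :=
              (G_mulVec_apply_ne g lam m _ p hp).symm
          _ = x p := by rw [hGm]
  have hGjx : (G n N g lam j).mulVec x = x := by
    have h1 := hkey j (Nat.le_of_lt hj)
    have h2 := hkey (j + 1) hj
    rw [hstep j hj, ← Matrix.mulVec_mulVec, h2] at h1
    exact h1
  show (Gprod n N g lam - 1).mulVec ((G n N g lam j).mulVec x) = 0
  rw [hGjx]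
  exact hx

end KLM
end

section
/- For x = (x_1,…,x_n) ∈ k^{Nn} (blocks x_j ∈ k^N), define w_j(x) := λ Σ_{k<j} (g_k − I) x_k + (λ g_j − I) x_j + Σ_{k>j} (g_k − I) x_k for 1 ≤ j ≤ n. Then x ∈ L if and only if w_j(x) = 0 for all 1 ≤ j ≤ n. (Thus L is the kernel of the Nn×Nn matrix C whose (j,k) block is λ(g_k − I) for k < j, λ g_j − I for k = j, and g_k − I for k > j.) -/
open Matrix

namespace KLM

variable {k : Type*} [Field k]

def Cmat (n N : ℕ) (g : ℕ → Matrix (Fin N) (Fin N) k) (lam : k) :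
    Matrix (Fin n × Fin N) (Fin n × Fin N) k :=
  blk n N fun r c =>
    if c < r then lam • (g c - 1) else if c = r then lam • g r - 1 else g c - 1

def Q (n N : ℕ) (g : ℕ → Matrix (Fin N) (Fin N) k) (lam : k) (m : ℕ) :
    Matrix (Fin n × Fin N) (Fin n × Fin N) k :=
  (((List.finRange n).drop m).map fun j => G n N g lam (j : ℕ)).prod


lemma Q_top (n N : ℕ) (g : ℕ → Matrix (Fin N) (Fin N) k) (lam : k) :
    Q n N g lam n = 1 := by
  rw [Q, List.drop_eq_nil_of_le (by simp)]
  simp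

lemma Q_zero (n N : ℕ) (g : ℕ → Matrix (Fin N) (Fin N) k) (lam : k) :
    Q n N g lam 0 = Gprod n N g lam := by
  rw [Q, Gprod, List.drop_zero]

lemma bind_coe {n : ℕ} (l : List (Fin n)) :
    (l >>= fun a => pure ((a : ℕ))) = l.map Fin.val := by
  induction l with
  | nil => rfl
  | cons a l ih =>
    show ((a : ℕ) :: (l >>= fun a => pure ((a : ℕ)))) = _
    rw [ih, List.map_cons]

lemma Q_succ (n N : ℕ) (g : ℕ → Matrix (Fin N) (Fin N) k) (lam : k) {m : ℕ} (hm : m < n) :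
    Q n N g lam m = G n N g lam m * Q n N g lam (m + 1) := by
  have h : (List.finRange n).drop m = (⟨m, hm⟩ : Fin n) :: (List.finRange n).drop (m + 1) := by
    rw [List.drop_eq_getElem_cons (by simpa using hm)]
    simp
  rw [Q, h, bind_coe, List.map_cons, List.map_cons, List.prod_cons, Q, bind_coe]

lemma mulVec_eq_sum (n N : ℕ) (M : Matrix (Fin n × Fin N) (Fin n × Fin N) k)
    (w : (Fin n × Fin N) → k) (i : Fin n) (a : Fin N) :
    M.mulVec w (i, a) = ∑ r : Fin n, ∑ b : Fin N, M (i, a) (r, b) * w (r, b) := by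
  rw [Matrix.mulVec, dotProduct, Fintype.sum_prod_type]

lemma G_mulVec (n N : ℕ) (g : ℕ → Matrix (Fin N) (Fin N) k) (lam : k)
    (t : Fin n) (w : (Fin n × Fin N) → k) (i : Fin n) (a : Fin N) :
    (G n N g lam (t : ℕ)).mulVec w (i, a) =
      (if i = t then (Cmat n N g lam).mulVec w (i, a) else 0) + w (i, a) := by
  by_cases hit : i = t
  · subst hit
    rw [if_pos rfl, mulVec_eq_sum, mulVec_eq_sum]
    have key : ∀ r : Fin n, ∀ b : Fin N,
        G n N g lam (i : ℕ) (i, a) (r, b) * w (r, b)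
          = Cmat n N g lam (i, a) (r, b) * w (r, b)
            + (if r = i then (if a = b then w (r, b) else 0) else 0) := by
      intro r b
      simp only [G, Cmat, blk, Matrix.of_apply]
      rcases lt_trichotomy (r : ℕ) (i : ℕ) with h | h | h
      · have hri : r ≠ i := Fin.ne_of_val_ne (Nat.ne_of_lt h)
        simp [h, hri]
      · have hri : r = i := Fin.ext h
        subst hri
        simp only [lt_self_iff_false, if_false, if_pos rfl, eq_self_iff_true, if_true,
          Matrix.sub_apply, Matrix.one_apply]
        by_cases hab : a = b
        · simp only [if_pos hab]; ring
        · simp only [if_neg hab]; ring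
      · have hri : r ≠ i := Fin.ne_of_val_ne (Nat.ne_of_gt h)
        simp [Nat.not_lt_of_gt h, Nat.ne_of_gt h, hri]
    simp only [key, Finset.sum_add_distrib]
    congr 1
    simp [Finset.sum_ite_eq]
  · rw [if_neg hit, zero_add, mulVec_eq_sum]
    have hvit : (i : ℕ) ≠ (t : ℕ) := fun h => hit (Fin.ext h)
    have key : ∀ r : Fin n, ∀ b : Fin N,
        G n N g lam (t : ℕ) (i, a) (r, b) * w (r, b)
          = if r = i then (if a = b then w (r, b) else 0) else 0 := by
      intro r b
      simp only [G, blk, Matrix.of_apply, if_neg hvit]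
      by_cases h : r = i
      · subst h
        simp [Matrix.one_apply, ite_mul]
      · have hh : (i : ℕ) ≠ (r : ℕ) := fun hh => h (Fin.ext hh.symm)
        simp [hh, h]
    simp only [key]
    simp [Finset.sum_ite_eq]

lemma G_mulVec' (n N : ℕ) (g : ℕ → Matrix (Fin N) (Fin N) k) (lam : k)
    (m : ℕ) (hm : m < n) (w : (Fin n × Fin N) → k) (i : Fin n) (a : Fin N) :
    (G n N g lam m).mulVec w (i, a) =
      (if (i : ℕ) = m then (Cmat n N g lam).mulVec w (i, a) else 0) + w (i, a) := by
  have h := G_mulVec n N g lam ⟨m, hm⟩ w i a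
  simpa [Fin.ext_iff] using h

lemma claim1 (n N : ℕ) (g : ℕ → Matrix (Fin N) (Fin N) k) (lam : k) :
    ∀ d m, m + d = n → ∀ (x : (Fin n × Fin N) → k) (i : Fin n), (i : ℕ) < m →
    ∀ a, (Q n N g lam m).mulVec x (i, a) = x (i, a) := by
  intro d
  induction d with
  | zero =>
    intro m hm x i hi a
    have hmn : m = n := by omega
    subst hmn
    rw [Q_top, Matrix.one_mulVec]
  | succ d ih =>
    intro m hm x i hi a
    have hmn : m < n := by omega
    rw [Q_succ n N g lam hmn, ← Matrix.mulVec_mulVec, G_mulVec' n N g lam m hmn,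
      if_neg (by omega), zero_add]
    exact ih (m + 1) (by omega) x i (by omega) a

lemma claim2 (n N : ℕ) (g : ℕ → Matrix (Fin N) (Fin N) k) (lam : k) :
    ∀ d m, m + d = n → ∀ (x : (Fin n × Fin N) → k) (i : Fin n), m ≤ (i : ℕ) →
    ∀ a, (Q n N g lam m).mulVec x (i, a)
      = (Cmat n N g lam).mulVec ((Q n N g lam ((i : ℕ) + 1)).mulVec x) (i, a) + x (i, a) := by
  intro d
  induction d with
  | zero =>
    intro m hm x i hi a
    exact absurd i.isLt (by omega)
  | succ d ih =>
    intro m hm x i hi a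
    have hmn : m < n := by omega
    rw [Q_succ n N g lam hmn, ← Matrix.mulVec_mulVec, G_mulVec' n N g lam m hmn]
    by_cases him : (i : ℕ) = m
    · rw [if_pos him]
      have h1 : (Q n N g lam (m + 1)).mulVec x (i, a) = x (i, a) :=
        claim1 n N g lam d (m + 1) (by omega) x i (by omega) a
      rw [h1, him]
    · rw [if_neg him, zero_add]
      exact ih (m + 1) (by omega) x i (by omega) a

lemma main_lemma (n N : ℕ) (g : ℕ → Matrix (Fin N) (Fin N) k) (lam : k) :
    ∀ d m, m + d = n → ∀ (x : (Fin n × Fin N) → k),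
    (∀ j : Fin n, m ≤ (j : ℕ) → ∀ a, (Cmat n N g lam).mulVec x (j, a) = 0) →
    ∀ i a, (Q n N g lam m).mulVec x (i, a) = x (i, a) := by
  intro d
  induction d using Nat.strong_induction_on with
  | _ d ih =>
    intro m hm x hx i a
    by_cases him : (i : ℕ) < m
    · exact claim1 n N g lam d m hm x i him a
    · push_neg at him
      have hin : (i : ℕ) < n := i.isLt
      have h2 := claim2 n N g lam d m hm x i him a
      have hd' : n - ((i : ℕ) + 1) < d := by omega
      have hQ : (Q n N g lam ((i : ℕ) + 1)).mulVec x = x := by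
        funext p
        obtain ⟨j, b⟩ := p
        exact ih _ hd' ((i : ℕ) + 1) (by omega) x (fun j hj a => hx j (by omega) a) j b
      rw [h2, hQ, hx i him a, zero_add]

lemma conv_lemma (n N : ℕ) (g : ℕ → Matrix (Fin N) (Fin N) k) (lam : k) :
    ∀ d m, m + d = n → ∀ (x : (Fin n × Fin N) → k),
    (Q n N g lam 0).mulVec x = x →
    ∀ j : Fin n, m ≤ (j : ℕ) → ∀ a, (Cmat n N g lam).mulVec x (j, a) = 0 := by
  intro d
  induction d with
  | zero =>
    intro m hm x hQ j hj a
    exact absurd j.isLt (by omega)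
  | succ d ih =>
    intro m hm x hQ j hj a
    by_cases hjm : m < (j : ℕ)
    · exact ih (m + 1) (by omega) x hQ j (by omega) a
    · have hjm' : (j : ℕ) = m := by omega
      have hX : (Q n N g lam (m + 1)).mulVec x = x := by
        funext p
        obtain ⟨i, b⟩ := p
        exact main_lemma n N g lam d (m + 1) (by omega) x
          (fun j' hj' a => ih (m + 1) (by omega) x hQ j' hj' a) i b
      have h2 := claim2 n N g lam n 0 (by omega) x j (by omega) a
      rw [hjm', hX] at h2
      have hq := congrFun hQ (j, a)
      rw [hq] at h2
      exact (right_eq_add.mp h2)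

lemma Cmat_apply_eq (n N : ℕ) (g : ℕ → Matrix (Fin N) (Fin N) k) (lam : k)
    (x : (Fin n × Fin N) → k) (j : Fin n) (a : Fin N) :
    (Cmat n N g lam).mulVec x (j, a)
      = (∑ t : Fin n,
          if (t : ℕ) < (j : ℕ) then lam • (g (t : ℕ) - 1).mulVec (fun a => x (t, a))
          else if t = j then (lam • g (j : ℕ) - 1).mulVec (fun a => x (j, a))
          else (g (t : ℕ) - 1).mulVec (fun a => x (t, a))) a := by
  rw [mulVec_eq_sum, Finset.sum_apply]
  apply Finset.sum_congr rfl
  intro t _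
  simp only [Cmat, blk, Matrix.of_apply, Matrix.mulVec, dotProduct,
    apply_ite (fun f : Fin N → k => f a), Pi.smul_apply, smul_eq_mul]
  by_cases h1 : (t : ℕ) < (j : ℕ)
  · simp [h1, Finset.mul_sum, Matrix.sub_apply, mul_assoc]
  · by_cases h2 : t = j
    · subst h2
      simp [h1]
    · have h3 : (t : ℕ) ≠ (j : ℕ) := fun hh => h2 (Fin.ext hh)
      simp [h1, h2, h3]

/-- `x ∈ L` iff all the vectors
`w_j(x) = λ Σ_{k<j} (g_k − 1) x_k + (λ g_j − 1) x_j + Σ_{k>j} (g_k − 1) x_k`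
vanish; i.e. `L` is the kernel of the block matrix `C` with `(j,k)` block
`λ(g_k − 1)` for `k < j`, `λ g_j − 1` for `k = j`, and `g_k − 1` for `k > j`. -/
theorem L_eq_ker_C
    (N n : ℕ) (hN : 1 ≤ N) (hn : 2 ≤ n)
    (g : ℕ → Matrix (Fin N) (Fin N) k) (lam : k) (hlam : lam ≠ 0)
    (hgu : ∀ j, j < n → IsUnit (g j)) :
    ∀ x : (Fin n × Fin N) → k,
      x ∈ Lset n N g lam ↔
        ∀ j : Fin n, (∑ t : Fin n,
          if (t : ℕ) < (j : ℕ) then lam • (g (t : ℕ) - 1).mulVec (fun a => x (t, a))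
          else if t = j then (lam • g (j : ℕ) - 1).mulVec (fun a => x (j, a))
          else (g (t : ℕ) - 1).mulVec (fun a => x (t, a))) = 0 := by
  intro x
  have hmem : x ∈ Lset n N g lam ↔ (Q n N g lam 0).mulVec x = x := by
    rw [Lset, Set.mem_setOf_eq, Matrix.sub_mulVec, Matrix.one_mulVec, sub_eq_zero, Q_zero]
  constructor
  · intro hx j
    funext a
    have h0 := conv_lemma n N g lam n 0 (by omega) x (hmem.mp hx) j (by omega) a
    rw [Cmat_apply_eq] at h0
    simpa using h0
  · intro hS
    rw [hmem]
    funext p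
    obtain ⟨i, a⟩ := p
    refine main_lemma n N g lam n 0 (by omega) x (fun j _ a => ?_) i a
    rw [Cmat_apply_eq]
    have := congrFun (hS j) a
    simpa using this


end KLM
end

section
/- The matrix H̃ is Hermitian: H̃^† = H̃. -/
open Matrix

namespace KLM

variable {k : Type*} [Field k]

/-- The Hermitian matrix `H̃` of the monodromy-invariant form: its `(j,c)` block is
`μ⁻¹ H (g_j⁻¹ − 1)(g_c − 1)` for `j < c`, `μ⁻¹ H (g_j⁻¹ − λ)(g_j − 1)` for `j = c`
(with `λ = μ²`), and `μ H (g_j⁻¹ − 1)(g_c − 1)` for `j > c`. -/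
noncomputable def Ht (n N : ℕ) (g : ℕ → Matrix (Fin N) (Fin N) ℂ) (H : Matrix (Fin N) (Fin N) ℂ)
    (mu : ℂ) : Matrix (Fin n × Fin N) (Fin n × Fin N) ℂ :=
  blk n N fun j c =>
    if j < c then mu⁻¹ • (H * ((g j)⁻¹ - 1) * (g c - 1))
    else if j = c then
      mu⁻¹ • (H * ((g j)⁻¹ - mu ^ 2 • (1 : Matrix (Fin N) (Fin N) ℂ)) * (g j - 1))
    else mu • (H * ((g j)⁻¹ - 1) * (g c - 1))

/-- The matrix `H̃` is Hermitian: `H̃ᴴ = H̃`. -/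
theorem Ht_isHermitian
    (N n : ℕ) (hN : 1 ≤ N) (hn : 2 ≤ n)
    (g : ℕ → Matrix (Fin N) (Fin N) ℂ)
    (hgu : ∀ j, j < n → IsUnit (g j))
    (mu : ℂ) (hmu : ‖mu‖ = 1)
    (H : Matrix (Fin N) (Fin N) ℂ) (hH : Hᴴ = H)
    (hunit : ∀ j, j < n → (g j)ᴴ * H * g j = H) :
    (Ht n N g H mu)ᴴ = Ht n N g H mu := by
  -- scalar facts
  have hmu0 : mu ≠ 0 := by intro h; simp [h] at hmu
  have hstar : star mu = mu⁻¹ := by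
    field_simp
    rw [mul_comm, show star mu = (starRingEnd ℂ) mu from rfl, Complex.mul_conj]
    norm_cast
    rw [← Complex.sq_norm mu, hmu]; norm_num
  have hstarinv : star mu⁻¹ = mu := by rw [star_inv₀, hstar, inv_inv]
  -- block function
  set B : ℕ → ℕ → Matrix (Fin N) (Fin N) ℂ := fun j c =>
    if j < c then mu⁻¹ • (H * ((g j)⁻¹ - 1) * (g c - 1))
    else if j = c then
      mu⁻¹ • (H * ((g j)⁻¹ - mu ^ 2 • (1 : Matrix (Fin N) (Fin N) ℂ)) * (g j - 1))
    else mu • (H * ((g j)⁻¹ - 1) * (g c - 1)) with hB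
  -- invariance consequences
  have h1 : ∀ a, a < n → (g a)ᴴ * H = H * (g a)⁻¹ := by
    intro a ha
    have hd : IsUnit (g a).det := (isUnit_iff_isUnit_det _).mp (hgu a ha)
    calc (g a)ᴴ * H = (g a)ᴴ * H * (g a * (g a)⁻¹) := by
          rw [mul_nonsing_inv _ hd, mul_one]
      _ = ((g a)ᴴ * H * g a) * (g a)⁻¹ := by noncomm_ring
      _ = H * (g a)⁻¹ := by rw [hunit a ha]
  have h2 : ∀ a, a < n → ((g a)ᴴ)⁻¹ * H = H * g a := by
    intro a ha
    have hd : IsUnit (g a)ᴴ.det := by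
      rw [det_conjTranspose]; exact ((isUnit_iff_isUnit_det _).mp (hgu a ha)).star
    have h3 : (g a)ᴴ * (H * g a) = H := by rw [← mul_assoc, hunit a ha]
    calc ((g a)ᴴ)⁻¹ * H = ((g a)ᴴ)⁻¹ * ((g a)ᴴ * (H * g a)) := by rw [h3]
      _ = (((g a)ᴴ)⁻¹ * (g a)ᴴ) * (H * g a) := by noncomm_ring
      _ = H * g a := by rw [nonsing_inv_mul _ hd, one_mul]
  -- core off-diagonal identity
  have core : ∀ a b, a < n → b < n →
      (H * ((g a)⁻¹ - 1) * (g b - 1))ᴴ = H * ((g b)⁻¹ - 1) * (g a - 1) := by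
    intro a b ha hb
    calc (H * ((g a)⁻¹ - 1) * (g b - 1))ᴴ
        = ((g b)ᴴ - 1) * (((g a)ᴴ)⁻¹ - 1) * H := by
          simp [conjTranspose_sub, conjTranspose_mul, conjTranspose_nonsing_inv, hH, mul_assoc]
      _ = (g b)ᴴ * (((g a)ᴴ)⁻¹ * H) - (g b)ᴴ * H - ((g a)ᴴ)⁻¹ * H + H := by noncomm_ring
      _ = (g b)ᴴ * (H * g a) - H * (g b)⁻¹ - H * g a + H := by rw [h1 b hb, h2 a ha]
      _ = ((g b)ᴴ * H) * g a - H * (g b)⁻¹ - H * g a + H := by noncomm_ring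
      _ = (H * (g b)⁻¹) * g a - H * (g b)⁻¹ - H * g a + H := by rw [h1 b hb]
      _ = H * ((g b)⁻¹ - 1) * (g a - 1) := by noncomm_ring
  -- blockwise hermiticity
  have key : ∀ j c, j < n → c < n → (B c j)ᴴ = B j c := by
    intro j c hj hc
    rcases lt_trichotomy j c with h | h | h
    · have h' : ¬ c < j := not_lt_of_gt h
      have h'' : c ≠ j := (ne_of_gt h)
      simp only [hB, if_neg h', if_neg h'', if_pos h]
      rw [conjTranspose_smul, core c j hc hj, hstar]
    · subst h
      simp only [hB, lt_irrefl, if_neg (lt_irrefl j), if_pos rfl]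
      -- diagonal case
      have hd : IsUnit (g j).det := (isUnit_iff_isUnit_det _).mp (hgu j hj)
      have hinv : H * (g j)⁻¹ * g j = H := by
        rw [mul_assoc, nonsing_inv_mul _ hd, mul_one]
      have hgHg : (g j)ᴴ * (H * g j) = H := by rw [← mul_assoc, hunit j hj]
      have hstar2 : star (mu ^ 2) = mu⁻¹ * mu⁻¹ := by rw [star_pow, hstar]; ring
      calc (mu⁻¹ • (H * ((g j)⁻¹ - mu ^ 2 • (1 : Matrix (Fin N) (Fin N) ℂ)) * (g j - 1)))ᴴ
          = mu • (((g j)ᴴ - 1) * (((g j)ᴴ)⁻¹ - (mu⁻¹ * mu⁻¹) • 1) * H) := by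
            simp [conjTranspose_smul, conjTranspose_sub, conjTranspose_mul,
              conjTranspose_nonsing_inv, hH, hstarinv, hstar2, mul_assoc]
        _ = mu • ((g j)ᴴ * (((g j)ᴴ)⁻¹ * H)) - (mu * (mu⁻¹ * mu⁻¹)) • ((g j)ᴴ * H)
            - mu • (((g j)ᴴ)⁻¹ * H) + (mu * (mu⁻¹ * mu⁻¹)) • H := by
            simp only [sub_mul, mul_sub, smul_sub, mul_smul_comm, smul_mul_assoc, one_mul,
              mul_one, smul_smul, mul_assoc]
            module
        _ = mu • ((g j)ᴴ * (H * g j)) - mu⁻¹ • (H * (g j)⁻¹) - mu • (H * g j) + mu⁻¹ • H := by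
            rw [h1 j hj, h2 j hj]
            match_scalars <;> field_simp
        _ = mu • H - mu⁻¹ • (H * (g j)⁻¹) - mu • (H * g j) + mu⁻¹ • H := by rw [hgHg]
        _ = mu⁻¹ • (H * ((g j)⁻¹ - mu ^ 2 • (1 : Matrix (Fin N) (Fin N) ℂ)) * (g j - 1)) := by
            simp only [sub_mul, mul_sub, smul_sub, mul_smul_comm, smul_mul_assoc, one_mul,
              mul_one, smul_smul, hinv]
            match_scalars <;> field_simp <;> ring
    · have h'' : j ≠ c := (ne_of_gt h)
      simp only [hB, if_pos h, if_neg (not_lt_of_gt h), if_neg h'']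
      rw [conjTranspose_smul, core c j hc hj, hstarinv]
  -- assemble
  ext p q
  have hkey := congrFun (congrFun (key p.1.1 q.1.1 p.1.2 q.1.2) p.2) q.2
  simpa [Ht, blk, conjTranspose_apply, hB] using hkey


end KLM
end
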